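/- arXiv:1709.01210 — 2 statements merged into one kernel-verified Lean document; each statement's English description precedes it below -/
import Mathlib

section
/- For 0 < α < 2, α ≠ 1, -1 ≤ β ≤ 1 with β ≠ 0, and θ₀ = α^{-1} arctan(β tan(πα/2)), and for any d with -α < d and d ≠ 0: ∫_0^∞ sin(-β tan(πα/2) r^α) r^{d-1} e^{-r^α} dr = -(cos αθ₀)^{d/α} sin(dθ₀) Γ(1 + d/α)/d, where for -α < d < 0 the left-hand integral is interpreted with integrand sin(-β tan(πα/2) r^α) r^{d-1} e^{-r^α} (which is O(r^{d+α-1}) near 0, hence integrable). -/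
/-!
Substituting `u = r ^ α` turns the integral into `α⁻¹ ∫₀^∞ u^(s-1) e^(-u) sin(-τ u) du` with
`s = d / α > -1` and `τ = β tan(πα/2)`. For `Re a > 0`, `F(t) = ∫₀^∞ u^(a-1) e^(-(1 - it)u) du`
equals `Γ(a) (1 - it)^(-a)`: both sides are `Γ(a)` at `t = 0`, and differentiating under the
integral and integrating by parts shows that `F(t) (1 - it)^a` has zero derivative. Replacing
`e^(-(1 - it)u)` by `e^(-(1 - it)u) - e^(-u)` keeps the integral convergent down to `Re a > -1`,
and one more integration by parts gives `Γ(a) ((1 - it)^(-a) - 1)` there. Its imaginary part at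
real `a = s` is the sine integral, and `(1 - it)^(-s) = cos(arctan t)^s e^(i s arctan t)`.
-/

open Real MeasureTheory Set Filter Topology
open Complex (I)
open scoped Complex

noncomputable def gammaFourierIntegral (a : ℂ) (t : ℝ) : ℂ :=
  ∫ u in Ioi (0 : ℝ), (u : ℂ) ^ (a - 1) * cexp (-((1 - t * I) * u))

lemma one_sub_mul_I_mem_slitPlane (t : ℝ) : 1 - t * I ∈ Complex.slitPlane :=
  Complex.mem_slitPlane_iff.mpr (Or.inl (by simp))

lemma cexp_neg_one_sub_mul_I_mul (t u : ℝ) :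
    cexp (-((1 - t * I) * u)) = rexp (-u) * cexp ((t * u : ℝ) * I) := by
  rw [Complex.ofReal_exp, ← Complex.exp_add]
  push_cast
  ring_nf

lemma hasDerivAt_cexp_neg_one_sub_mul_I_mul (t x : ℝ) :
    HasDerivAt (fun y : ℝ ↦ cexp (-((1 - t * I) * y)))
      (-(1 - t * I) * cexp (-((1 - t * I) * x))) x := by
  simpa [mul_comm] using ((hasDerivAt_id (x : ℂ)).const_mul (1 - t * I)).neg.cexp.comp_ofReal

lemma norm_cexp_neg_one_sub_mul_I_mul (t u : ℝ) :
    ‖cexp (-((1 - t * I) * u))‖ = rexp (-u) := by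
  rw [cexp_neg_one_sub_mul_I_mul, norm_mul, Complex.norm_exp_ofReal_mul_I, mul_one,
    Complex.norm_real, norm_of_nonneg (exp_pos _).le]

lemma norm_cpow_mul_cexp_neg_one_sub_mul_I_mul (a : ℂ) (t : ℝ) {u : ℝ} (hu : 0 < u) :
    ‖(u : ℂ) ^ a * cexp (-((1 - t * I) * u))‖ = u ^ a.re * rexp (-u) := by
  rw [norm_mul, Complex.norm_cpow_eq_rpow_re_of_pos hu, norm_cexp_neg_one_sub_mul_I_mul]

lemma integrableOn_cpow_mul_cexp_neg_one_sub_mul_I_mul {a : ℂ} (ha : 0 < a.re) (t : ℝ) :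
    IntegrableOn (fun u : ℝ ↦ (u : ℂ) ^ (a - 1) * cexp (-((1 - t * I) * u))) (Ioi 0) := by
  refine Integrable.mono (Complex.GammaIntegral_convergent ha) ?_ ?_
  · refine ContinuousOn.aestronglyMeasurable (fun u hu ↦ ?_) measurableSet_Ioi
    exact ((Complex.continuousAt_ofReal_cpow_const _ _ (Or.inr hu.ne')).mul
      (by fun_prop)).continuousWithinAt
  · filter_upwards [ae_restrict_mem measurableSet_Ioi] with u hu
    rw [norm_cpow_mul_cexp_neg_one_sub_mul_I_mul _ _ hu, norm_mul,
      Complex.norm_cpow_eq_rpow_re_of_pos hu, Complex.norm_real, norm_of_nonneg (exp_pos _).le,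
      mul_comm]

lemma gammaFourierIntegral_zero {a : ℂ} (ha : 0 < a.re) :
    gammaFourierIntegral a 0 = Complex.Gamma a := by
  rw [Complex.Gamma_eq_integral ha, Complex.GammaIntegral, gammaFourierIntegral]
  refine setIntegral_congr_fun measurableSet_Ioi fun u _ ↦ ?_
  simp [mul_comm]

lemma tendsto_rpow_mul_exp_neg_nhdsGT_zero {b : ℝ} (hb : 0 < b) :
    Tendsto (fun x : ℝ ↦ x ^ b * rexp (-x)) (𝓝[>] 0) (𝓝 0) := by
  have h : ContinuousAt (fun x : ℝ ↦ x ^ b * rexp (-x)) 0 :=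
    (continuousAt_rpow_const 0 b (Or.inr hb.le)).mul (by fun_prop)
  simpa [zero_rpow hb.ne'] using h.tendsto.mono_left nhdsWithin_le_nhds

lemma tendsto_zero_of_norm_le_rpow_mul_exp_neg {f : ℝ → ℂ} {b C : ℝ} (hb : 0 < b)
    (hf : ∀ x > 0, ‖f x‖ ≤ C * (x ^ b * rexp (-x))) :
    Tendsto f (𝓝[>] 0) (𝓝 0) ∧ Tendsto f atTop (𝓝 0) := by
  constructor
  · refine squeeze_zero_norm' ?_ (by simpa using
      (tendsto_rpow_mul_exp_neg_nhdsGT_zero hb).const_mul C)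
    filter_upwards [self_mem_nhdsWithin] with x hx using hf x hx
  · refine squeeze_zero_norm' ?_ (by simpa using
      (tendsto_rpow_mul_exp_neg_mul_atTop_nhds_zero b 1 one_pos).const_mul C)
    filter_upwards [eventually_gt_atTop 0] with x hx using by simpa using hf x hx

lemma mul_integral_cpow_sub_one_mul_eq_neg_integral_cpow_mul {a : ℂ} (ha : a ≠ 0)
    {φ φ' : ℝ → ℂ}
    (hφ : ∀ x ∈ Ioi (0 : ℝ), HasDerivAt φ (φ' x) x)
    (hint : IntegrableOn (fun x : ℝ ↦ (x : ℂ) ^ (a - 1) * φ x) (Ioi 0))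
    (hint' : IntegrableOn (fun x : ℝ ↦ (x : ℂ) ^ a * φ' x) (Ioi 0))
    (hzero : Tendsto (fun x : ℝ ↦ (x : ℂ) ^ a * φ x) (𝓝[>] 0) (𝓝 0))
    (htop : Tendsto (fun x : ℝ ↦ (x : ℂ) ^ a * φ x) atTop (𝓝 0)) :
    a * ∫ x in Ioi (0 : ℝ), (x : ℂ) ^ (a - 1) * φ x
      = -∫ x in Ioi (0 : ℝ), (x : ℂ) ^ a * φ' x := by
  have hpow : ∀ x ∈ Ioi (0 : ℝ),
      HasDerivAt (fun y : ℝ ↦ (y : ℂ) ^ a) (a * x ^ (a - 1)) x :=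
    fun x hx ↦ hasDerivAt_ofReal_cpow_const (ne_of_gt hx) ha
  have hint'' : IntegrableOn (fun x : ℝ ↦ a * (x : ℂ) ^ (a - 1) * φ x) (Ioi 0) := by
    simp only [mul_assoc]
    exact hint.const_mul a
  have := integral_Ioi_mul_deriv_eq_deriv_mul hpow hφ hint' hint'' hzero htop
  rw [this, ← integral_const_mul]
  simp only [mul_assoc, sub_self, zero_sub, neg_neg]

lemma one_sub_mul_I_mul_gammaFourierIntegral_add_one {a : ℂ} (ha : 0 < a.re) (t : ℝ) :
    (1 - t * I) * gammaFourierIntegral (a + 1) t = a * gammaFourierIntegral a t := by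
  have ha0 : a ≠ 0 := fun h ↦ by simp [h] at ha
  have ha1 : 0 < (a + 1).re := by rw [Complex.add_re, Complex.one_re]; linarith
  have hint := integrableOn_cpow_mul_cexp_neg_one_sub_mul_I_mul ha1 t
  simp only [add_sub_cancel_right] at hint
  obtain ⟨hzero, htop⟩ := tendsto_zero_of_norm_le_rpow_mul_exp_neg (C := 1) ha
    (f := fun x : ℝ ↦ (x : ℂ) ^ a * cexp (-((1 - t * I) * x)))
    fun x hx ↦ by rw [norm_cpow_mul_cexp_neg_one_sub_mul_I_mul _ _ hx, one_mul]
  have := mul_integral_cpow_sub_one_mul_eq_neg_integral_cpow_mul ha0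
    (fun x _ ↦ hasDerivAt_cexp_neg_one_sub_mul_I_mul t x)
    (integrableOn_cpow_mul_cexp_neg_one_sub_mul_I_mul ha t)
    (by simp only [mul_left_comm _ (-(1 - t * I))]; exact hint.const_mul _) hzero htop
  rw [gammaFourierIntegral, gammaFourierIntegral, this, add_sub_cancel_right]
  simp only [neg_mul, mul_neg, integral_neg, neg_neg, mul_left_comm _ (1 - t * I),
    integral_const_mul]

lemma hasDerivAt_gammaFourierIntegral {a : ℂ} (ha : 0 < a.re) (t : ℝ) :
    HasDerivAt (gammaFourierIntegral a) (I * gammaFourierIntegral (a + 1) t) t := by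
  have hbound := Real.GammaIntegral_convergent (s := a.re + 1) (by linarith)
  rw [add_sub_cancel_right] at hbound
  have ha1 : 0 < (a + 1).re := by rw [Complex.add_re, Complex.one_re]; linarith
  have hint := integrableOn_cpow_mul_cexp_neg_one_sub_mul_I_mul ha1 t
  rw [add_sub_cancel_right] at hint
  have hderiv : ∀ x ∈ Ioi (0 : ℝ), ∀ s : ℝ,
      HasDerivAt (fun s : ℝ ↦ (x : ℂ) ^ (a - 1) * cexp (-((1 - s * I) * x)))
        (I * ((x : ℂ) ^ a * cexp (-((1 - s * I) * x)))) s := fun x hx s ↦ by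
    have hexp : HasDerivAt (fun s : ℝ ↦ cexp (-((1 - s * I) * x)))
        (cexp (-((1 - s * I) * x)) * (I * x)) s := by
      simpa using (((hasDerivAt_id (s : ℂ)).mul_const I).const_sub 1 |>.mul_const
        (x : ℂ)).neg.cexp.comp_ofReal
    refine (hexp.const_mul ((x : ℂ) ^ (a - 1))).congr_deriv ?_
    have hx0 : (x : ℂ) ≠ 0 := Complex.ofReal_ne_zero.mpr (ne_of_gt hx)
    rw [Complex.cpow_sub _ _ hx0, Complex.cpow_one]
    field_simp
  have := hasDerivAt_integral_of_dominated_loc_of_deriv_le (μ := volume.restrict (Ioi 0))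
    (F := fun (s : ℝ) (x : ℝ) ↦ (x : ℂ) ^ (a - 1) * cexp (-((1 - s * I) * x)))
    (F' := fun (s : ℝ) (x : ℝ) ↦ I * ((x : ℂ) ^ a * cexp (-((1 - s * I) * x))))
    (bound := fun x ↦ rexp (-x) * x ^ a.re) (x₀ := t) univ_mem
    (Eventually.of_forall fun s ↦ (integrableOn_cpow_mul_cexp_neg_one_sub_mul_I_mul ha s).1)
    (integrableOn_cpow_mul_cexp_neg_one_sub_mul_I_mul ha t) (hint.const_mul I).1 ?_ hbound ?_
  · rw [gammaFourierIntegral, add_sub_cancel_right, ← integral_const_mul]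
    exact this.2
  · filter_upwards [ae_restrict_mem measurableSet_Ioi] with x hx s _
    rw [norm_mul, Complex.norm_I, one_mul, norm_cpow_mul_cexp_neg_one_sub_mul_I_mul _ _ hx,
      mul_comm]
  · filter_upwards [ae_restrict_mem measurableSet_Ioi] with x hx s _ using hderiv x hx s

lemma gammaFourierIntegral_eq_Gamma_mul_cpow {a : ℂ} (ha : 0 < a.re) (t : ℝ) :
    gammaFourierIntegral a t = Complex.Gamma a * (1 - t * I) ^ (-a) := by
  have hderiv : ∀ s : ℝ,
      HasDerivAt (fun s : ℝ ↦ gammaFourierIntegral a s * (1 - s * I) ^ a) 0 s := by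
    intro s
    have hw : HasDerivAt (fun s : ℝ ↦ (1 - s * I) ^ a) (a * (1 - s * I) ^ (a - 1) * -I) s := by
      simpa using ((hasDerivAt_id (s : ℂ)).mul_const I |>.const_sub 1 |>.cpow_const
        (one_sub_mul_I_mem_slitPlane s)).comp_ofReal
    refine ((hasDerivAt_gammaFourierIntegral ha s).mul hw).congr_deriv ?_
    have hw0 : (1 - s * I) ≠ 0 := Complex.slitPlane_ne_zero (one_sub_mul_I_mem_slitPlane s)
    rw [show (1 - s * I) ^ a = (1 - s * I) ^ (a - 1) * (1 - s * I) by
      rw [Complex.cpow_sub _ _ hw0, Complex.cpow_one, div_mul_cancel₀ _ hw0]]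
    linear_combination (I * (1 - s * I) ^ (a - 1)) *
      one_sub_mul_I_mul_gammaFourierIntegral_add_one ha s
  have hconst := is_const_of_deriv_eq_zero (fun s ↦ (hderiv s).differentiableAt)
    (fun s ↦ (hderiv s).deriv) t 0
  have ht0 : (1 - t * I) ^ a ≠ 0 := by
    rw [Ne, Complex.cpow_eq_zero_iff]
    exact fun h ↦ Complex.slitPlane_ne_zero (one_sub_mul_I_mem_slitPlane t) h.1
  simp only [Complex.ofReal_zero, zero_mul, sub_zero, Complex.one_cpow, mul_one,
    gammaFourierIntegral_zero ha] at hconst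
  rw [Complex.cpow_neg, ← hconst, mul_inv_cancel_right₀ ht0]

lemma norm_cexp_neg_one_sub_mul_I_mul_sub_exp_le (t : ℝ) {u : ℝ} (hu : 0 ≤ u) :
    ‖cexp (-((1 - t * I) * u)) - rexp (-u)‖ ≤ |t| * (u * rexp (-u)) := by
  rw [cexp_neg_one_sub_mul_I_mul, ← mul_sub_one, norm_mul, Complex.norm_real,
    norm_of_nonneg (exp_pos _).le, mul_comm ((t * u : ℝ) : ℂ)]
  calc rexp (-u) * ‖cexp (I * (t * u : ℝ)) - 1‖ ≤ rexp (-u) * ‖t * u‖ := by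
        gcongr
        exact Real.norm_exp_I_mul_ofReal_sub_one_le
    _ = |t| * (u * rexp (-u)) := by
        rw [Real.norm_eq_abs, abs_mul, abs_of_nonneg hu]
        ring

lemma norm_cpow_mul_cexp_neg_one_sub_mul_I_mul_sub_exp_le (a : ℂ) (t : ℝ) {x : ℝ}
    (hx : 0 < x) :
    ‖(x : ℂ) ^ a * (cexp (-((1 - t * I) * x)) - rexp (-x))‖
      ≤ |t| * (x ^ (a.re + 1) * rexp (-x)) := by
  rw [norm_mul, Complex.norm_cpow_eq_rpow_re_of_pos hx, rpow_add_one hx.ne']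
  calc x ^ a.re * ‖cexp (-((1 - t * I) * x)) - rexp (-x)‖
      ≤ x ^ a.re * (|t| * (x * rexp (-x))) := by
        gcongr
        exact norm_cexp_neg_one_sub_mul_I_mul_sub_exp_le t hx.le
    _ = |t| * (x ^ a.re * x * rexp (-x)) := by ring

lemma integrableOn_cpow_mul_cexp_neg_one_sub_mul_I_mul_sub_exp {a : ℂ} (ha : -1 < a.re)
    (t : ℝ) :
    IntegrableOn
      (fun x : ℝ ↦ (x : ℂ) ^ (a - 1) * (cexp (-((1 - t * I) * x)) - rexp (-x))) (Ioi 0) := by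
  have hbound := Real.GammaIntegral_convergent (s := a.re + 1) (by linarith)
  rw [add_sub_cancel_right] at hbound
  refine (hbound.const_mul |t|).mono' ?_ ?_
  · refine ContinuousOn.aestronglyMeasurable (fun u hu ↦ ?_) measurableSet_Ioi
    exact ((Complex.continuousAt_ofReal_cpow_const _ _ (Or.inr (ne_of_gt hu))).mul
      (by fun_prop)).continuousWithinAt
  · filter_upwards [ae_restrict_mem measurableSet_Ioi] with x (hx : 0 < x)
    simpa [mul_comm (rexp (-x))] using
      norm_cpow_mul_cexp_neg_one_sub_mul_I_mul_sub_exp_le (a - 1) t hx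

/-- The analytic continuation of `gammaFourierIntegral_eq_Gamma_mul_cpow` to `-1 < re a`. -/
lemma integral_cpow_mul_cexp_neg_one_sub_mul_I_mul_sub_exp {a : ℂ} (ha : -1 < a.re)
    (ha0 : a ≠ 0) (t : ℝ) :
    ∫ u in Ioi (0 : ℝ), (u : ℂ) ^ (a - 1) * (cexp (-((1 - t * I) * u)) - rexp (-u))
      = Complex.Gamma a * ((1 - t * I) ^ (-a) - 1) := by
  have ha1 : 0 < (a + 1).re := by rw [Complex.add_re, Complex.one_re]; linarith
  have hderiv : ∀ x ∈ Ioi (0 : ℝ),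
      HasDerivAt (fun y : ℝ ↦ cexp (-((1 - t * I) * y)) - rexp (-y))
        (-(1 - t * I) * cexp (-((1 - t * I) * x)) + rexp (-x)) x := fun x _ ↦ by
    have h2 := ((Real.hasDerivAt_exp (-x)).comp x (hasDerivAt_neg x)).ofReal_comp
    refine ((hasDerivAt_cexp_neg_one_sub_mul_I_mul t x).sub h2).congr_deriv ?_
    push_cast
    ring
  have hint := integrableOn_cpow_mul_cexp_neg_one_sub_mul_I_mul_sub_exp ha t
  have h1 := integrableOn_cpow_mul_cexp_neg_one_sub_mul_I_mul ha1 t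
  have h2 := Complex.GammaIntegral_convergent ha1
  simp only [add_sub_cancel_right] at h1 h2
  have hsplit : EqOn
      (fun x : ℝ ↦ (x : ℂ) ^ a * (-(1 - t * I) * cexp (-((1 - t * I) * x)) + rexp (-x)))
      (fun x : ℝ ↦ -(1 - t * I) * ((x : ℂ) ^ a * cexp (-((1 - t * I) * x)))
        + rexp (-x) * (x : ℂ) ^ a) (Ioi 0) := fun x _ ↦ by ring
  have hint' : IntegrableOn
      (fun x : ℝ ↦ (x : ℂ) ^ a * (-(1 - t * I) * cexp (-((1 - t * I) * x)) + rexp (-x)))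
      (Ioi 0) :=
    IntegrableOn.congr_fun ((h1.const_mul _).add h2) hsplit.symm measurableSet_Ioi
  obtain ⟨hzero, htop⟩ := tendsto_zero_of_norm_le_rpow_mul_exp_neg (C := |t|)
    (b := a.re + 1) (by linarith)
    fun x hx ↦ norm_cpow_mul_cexp_neg_one_sub_mul_I_mul_sub_exp_le a t hx
  have hibp := mul_integral_cpow_sub_one_mul_eq_neg_integral_cpow_mul ha0 hderiv hint hint'
    hzero htop
  have hw0 : (1 - t * I) ≠ 0 := Complex.slitPlane_ne_zero (one_sub_mul_I_mem_slitPlane t)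
  have hF := gammaFourierIntegral_eq_Gamma_mul_cpow ha1 t
  rw [setIntegral_congr_fun measurableSet_Ioi hsplit, integral_add (h1.const_mul _) h2,
    integral_const_mul, ← add_sub_cancel_right a 1, ← gammaFourierIntegral,
    ← Complex.GammaIntegral, ← Complex.Gamma_eq_integral ha1, hF, add_sub_cancel_right,
    Complex.Gamma_add_one a ha0, show -(a + 1) = -a - 1 by ring, Complex.cpow_sub _ _ hw0,
    Complex.cpow_one] at hibp
  refine mul_left_cancel₀ ha0 (hibp.trans ?_)
  field_simp
  ring

lemma one_sub_mul_I_cpow_neg (s t : ℝ) :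
    (1 - t * I) ^ (-(s : ℂ)) = (cos (arctan t) ^ s : ℝ) * cexp ((s * arctan t : ℝ) * I) := by
  have hw0 : (1 - t * I) ≠ 0 := Complex.slitPlane_ne_zero (one_sub_mul_I_mem_slitPlane t)
  have hnorm : ‖1 - t * I‖ = (cos (arctan t))⁻¹ := by
    rw [cos_arctan, one_div, inv_inv, sub_eq_add_neg, ← neg_mul, ← Complex.ofReal_neg,
      ← Complex.ofReal_one, Complex.norm_add_mul_I, one_pow, neg_sq]
  have harg : Complex.arg (1 - t * I) = -arctan t := by
    rw [Complex.arg_of_re_nonneg (by simp), hnorm, cos_arctan, arctan_eq_arcsin,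
      ← Real.arcsin_neg]
    congr 1
    simp [div_eq_mul_inv]
  rw [Complex.cpow_def_of_ne_zero hw0]
  unfold Complex.log
  rw [hnorm, harg, Real.rpow_def_of_pos (cos_arctan_pos t), Complex.ofReal_exp,
    ← Complex.exp_add, Real.log_inv]
  congr 1
  push_cast
  ring

lemma integral_rpow_mul_exp_neg_mul_sin {s : ℝ} (hs : -1 < s) (hs0 : s ≠ 0) (t : ℝ) :
    ∫ u in Ioi (0 : ℝ), u ^ (s - 1) * rexp (-u) * sin (t * u)
      = Gamma s * cos (arctan t) ^ s * sin (s * arctan t) := by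
  have h := congrArg Complex.im (integral_cpow_mul_cexp_neg_one_sub_mul_I_mul_sub_exp
    (a := s) (by simpa using hs) (by exact_mod_cast hs0) t)
  have him := integral_im (integrableOn_cpow_mul_cexp_neg_one_sub_mul_I_mul_sub_exp
    (a := s) (by simpa using hs) t)
  simp only [RCLike.im_to_complex] at him
  rw [← him] at h
  rw [← setIntegral_congr_fun measurableSet_Ioi fun u (hu : 0 < u) ↦ ?_, h]
  · simp only [Complex.Gamma_ofReal, one_sub_mul_I_cpow_neg, mul_sub, mul_one, Complex.sub_im,
      Complex.im_ofReal_mul, Complex.exp_ofReal_mul_I_im, Complex.ofReal_im, sub_zero]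
    ring
  · rw [show (s : ℂ) - 1 = ((s - 1 : ℝ) : ℂ) by push_cast; ring,
      ← Complex.ofReal_cpow hu.le, cexp_neg_one_sub_mul_I_mul, ← mul_sub_one,
      Complex.im_ofReal_mul, Complex.im_ofReal_mul, Complex.sub_im, Complex.exp_ofReal_mul_I_im,
      Complex.one_im, sub_zero]
    ring

lemma integral_rpow_smul_comp_rpow_Ioi {E : Type*} [NormedAddCommGroup E] [NormedSpace ℝ E]
    (f : ℝ → E) {α : ℝ} (hα : 0 < α) (d : ℝ) :
    ∫ r in Ioi (0 : ℝ), r ^ (d - 1) • f (r ^ α)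
      = α⁻¹ • ∫ u in Ioi (0 : ℝ), u ^ (d / α - 1) • f u := by
  rw [← integral_comp_rpow_Ioi_of_pos (g := fun u ↦ u ^ (d / α - 1) • f u) hα,
    ← integral_smul]
  refine setIntegral_congr_fun measurableSet_Ioi fun r (hr : 0 < r) ↦ ?_
  rw [← rpow_mul hr.le, smul_smul, smul_smul, mul_sub, mul_div_cancel₀ _ hα.ne', mul_one,
    inv_mul_cancel_left₀ hα.ne', ← rpow_add hr, sub_add_sub_cancel']

theorem stmt_10_general (α β d : ℝ) (hα0 : 0 < α) (hd : -α < d) (hd0 : d ≠ 0) :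
    ∫ r in Set.Ioi (0:ℝ),
        Real.sin (-β * Real.tan (Real.pi * α / 2) * r ^ α) * r ^ (d - 1) * Real.exp (-(r ^ α))
      = -((Real.cos (α * (α⁻¹ * Real.arctan (β * Real.tan (Real.pi * α / 2))))) ^ (d / α)
          * Real.sin (d * (α⁻¹ * Real.arctan (β * Real.tan (Real.pi * α / 2))))
          * Real.Gamma (1 + d / α) / d) := by
  set τ := β * Real.tan (Real.pi * α / 2)
  have hs : -1 < d / α := by rwa [lt_div_iff₀ hα0, neg_one_mul]
  have hs0 : d / α ≠ 0 := div_ne_zero hd0 hα0.ne'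
  calc _ = ∫ r in Ioi (0 : ℝ), r ^ (d - 1) • (rexp (-(r ^ α)) * sin (-τ * r ^ α)) := by
        congr 1
        funext r
        simp only [smul_eq_mul, τ, neg_mul]
        ring
    _ = α⁻¹ * ∫ u in Ioi (0 : ℝ), u ^ (d / α - 1) * rexp (-u) * sin (-τ * u) := by
        rw [integral_rpow_smul_comp_rpow_Ioi (fun u ↦ rexp (-u) * sin (-τ * u)) hα0]
        simp only [smul_eq_mul, mul_assoc]
    _ = _ := by
        rw [integral_rpow_mul_exp_neg_mul_sin hs hs0, arctan_neg, cos_neg, mul_neg, Real.sin_neg,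
          mul_inv_cancel_left₀ hα0.ne', add_comm, Real.Gamma_add_one hs0]
        field_simp

theorem stmt_10 (α β d : ℝ) (hα0 : 0 < α) (hα2 : α < 2) (hα1 : α ≠ 1)
    (hβ : β ∈ Set.Icc (-1 : ℝ) 1) (hβ0 : β ≠ 0) (hd : -α < d) (hd0 : d ≠ 0) :
    ∫ r in Set.Ioi (0:ℝ),
        Real.sin (-β * Real.tan (Real.pi * α / 2) * r ^ α) * r ^ (d - 1) * Real.exp (-(r ^ α))
      = -((Real.cos (α * (α⁻¹ * Real.arctan (β * Real.tan (Real.pi * α / 2))))) ^ (d / α)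
          * Real.sin (d * (α⁻¹ * Real.arctan (β * Real.tan (Real.pi * α / 2))))
          * Real.Gamma (1 + d / α) / d) :=
  stmt_10_general α β d hα0 hd hd0
end

section
/- For 0 < α < 2, α ≠ 1, -1 ≤ β ≤ 1 and -α < d < 0, with θ₀ = α^{-1} arctan(β tan(πα/2)): ∫_0^∞ [cos(β tan(πα/2) r^α) - 1] r^{d-1} e^{-r^α} dr = [(cos αθ₀)^{d/α} cos(dθ₀) - 1] Γ(1 + d/α)/d. -/
open Real MeasureTheory Set Filter Topology
open Complex (I)
open scoped Complex

/-!
Substituting `u = r ^ α` turns the integral into `∫₀^∞ (cos (t u) - 1) u^(s-1) e^(-u) du`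
with `s = d / α ∈ (-1, 0)`, the real part of `G z = ∫₀^∞ u^(s-1) (e^(-z u) - e^(-u)) du`
at `z = 1 - t i`.
On the half-plane `0 < re z`, `G' z = -∫₀^∞ u^s e^(-z u) du = -Γ(s+1) z^(-s-1)`: the last integral
is a rescaled Gamma integral for real `z`, hence for all `z` by analytic continuation. As `G 1 = 0`,
`G z = Γ(s+1)/s (z^(-s) - 1)`, and with `θ = arctan t` one has `|1 - t i| = (cos θ)⁻¹`,
`arg (1 - t i) = -θ`.
-/

lemma norm_cexp_neg_mul_sub_cexp_neg_le (z : ℂ) {u : ℝ} (hu : 0 ≤ u) :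
    ‖cexp (-(z * u)) - cexp (-u)‖ ≤ u * Real.exp (-(min z.re 1 * u)) * ‖z - 1‖ := by
  set m := min z.re 1
  have hderiv : ∀ w ∈ {w : ℂ | m ≤ w.re}, HasDerivWithinAt (fun w : ℂ => cexp (-(w * u)))
      (-u * cexp (-(w * u))) {w : ℂ | m ≤ w.re} w := fun w _ => by
    simpa [mul_comm] using (((hasDerivAt_mul_const (u : ℂ)).neg).cexp).hasDerivWithinAt
  have hbound : ∀ w ∈ {w : ℂ | m ≤ w.re},
      ‖-(u : ℂ) * cexp (-(w * u))‖ ≤ u * Real.exp (-(m * u)) := by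
    intro w hw
    rw [norm_mul, norm_neg, Complex.norm_of_nonneg hu, Complex.norm_exp]
    gcongr
    simpa using mul_le_mul_of_nonneg_right hw hu
  simpa using (convex_halfSpace_re_ge m).norm_image_sub_le_of_norm_hasDerivWithin_le hderiv hbound
    (show (1 : ℂ) ∈ {w : ℂ | m ≤ w.re} by simp [m])
    (show z ∈ {w : ℂ | m ≤ w.re} by simp [m])

lemma norm_ofReal_cpow_mul_cexp_neg_mul {u : ℝ} (hu : 0 < u) (a z : ℂ) :
    ‖(u : ℂ) ^ a * cexp (-(z * u))‖ = u ^ a.re * Real.exp (-(z.re * u)) := by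
  rw [norm_mul, Complex.norm_cpow_eq_rpow_re_of_pos hu, Complex.norm_exp]
  simp

lemma integrableOn_rpow_mul_exp_neg_mul {s b : ℝ} (hs : -1 < s) (hb : 0 < b) :
    IntegrableOn (fun u : ℝ => u ^ s * Real.exp (-(b * u))) (Ioi 0) := by
  simpa using integrableOn_rpow_mul_exp_neg_mul_rpow hs one_pos hb

lemma aestronglyMeasurable_ofReal_cpow_mul_cexp_neg_mul (a z : ℂ) :
    AEStronglyMeasurable (fun u : ℝ => (u : ℂ) ^ a * cexp (-(z * u)))
      (volume.restrict (Ioi 0)) := by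
  refine (ContinuousOn.mul (fun u hu => ?_) (by fun_prop)).aestronglyMeasurable measurableSet_Ioi
  exact ((continuousAt_cpow_const (Complex.ofReal_mem_slitPlane.mpr hu)).comp
    Complex.continuous_ofReal.continuousAt).continuousWithinAt

lemma integrableOn_ofReal_cpow_mul_cexp_neg_mul {a z : ℂ} (ha : -1 < a.re) (hz : 0 < z.re) :
    IntegrableOn (fun u : ℝ => (u : ℂ) ^ a * cexp (-(z * u))) (Ioi 0) := by
  refine (integrableOn_rpow_mul_exp_neg_mul ha hz).mono'
    (aestronglyMeasurable_ofReal_cpow_mul_cexp_neg_mul a z) ?_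
  filter_upwards [ae_restrict_mem measurableSet_Ioi] with u hu
  rw [norm_ofReal_cpow_mul_cexp_neg_mul hu]

lemma integrableOn_ofReal_cpow_mul_cexp_neg_mul_sub_cexp_neg {s z : ℂ} (hs : -1 < s.re)
    (hz : 0 < z.re) :
    IntegrableOn (fun u : ℝ => (u : ℂ) ^ (s - 1) * (cexp (-(z * u)) - cexp (-u))) (Ioi 0) := by
  have hm : 0 < min z.re 1 := lt_min hz one_pos
  refine ((integrableOn_rpow_mul_exp_neg_mul hs hm).mul_const ‖z - 1‖).mono' ?_ ?_
  · refine ((aestronglyMeasurable_ofReal_cpow_mul_cexp_neg_mul (s - 1) z).sub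
      (aestronglyMeasurable_ofReal_cpow_mul_cexp_neg_mul (s - 1) 1)).congr ?_
    filter_upwards with u
    simp [mul_sub]
  filter_upwards [ae_restrict_mem measurableSet_Ioi] with u (hu : 0 < u)
  rw [norm_mul, Complex.norm_cpow_eq_rpow_re_of_pos hu]
  calc u ^ (s - 1).re * ‖cexp (-(z * u)) - cexp (-u)‖
      ≤ u ^ (s - 1).re * (u * Real.exp (-(min z.re 1 * u)) * ‖z - 1‖) := by
        gcongr; exact norm_cexp_neg_mul_sub_cexp_neg_le z hu.le
    _ = u ^ s.re * Real.exp (-(min z.re 1 * u)) * ‖z - 1‖ := by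
        rw [Complex.sub_re, Complex.one_re, ← mul_assoc, ← mul_assoc,
          ← Real.rpow_add_one hu.ne', sub_add_cancel]

lemma hasDerivAt_ofReal_cpow_sub_one_mul_cexp_neg_mul {u : ℝ} (hu : 0 < u) (b z : ℂ) :
    HasDerivAt (fun z : ℂ => (u : ℂ) ^ (b - 1) * cexp (-(z * u)))
      (-((u : ℂ) ^ b * cexp (-(z * u)))) z := by
  have hu' : (u : ℂ) ≠ 0 := Complex.ofReal_ne_zero.mpr hu.ne'
  refine (((hasDerivAt_mul_const (u : ℂ)).neg.cexp).const_mul ((u : ℂ) ^ (b - 1))).congr_deriv ?_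
  rw [Complex.cpow_sub _ _ hu', Complex.cpow_one]
  field_simp
  simp [mul_comm]

lemma hasDerivAt_integral_ofReal_cpow_sub_one_mul_cexp_neg_mul_sub {b z₀ : ℂ} (hb : -1 < b.re)
    (hz₀ : 0 < z₀.re) {f : ℝ → ℂ} (hf : AEStronglyMeasurable f (volume.restrict (Ioi 0)))
    (hint : IntegrableOn (fun u : ℝ => (u : ℂ) ^ (b - 1) * cexp (-(z₀ * u)) - f u) (Ioi 0)) :
    HasDerivAt (fun z : ℂ => ∫ u in Ioi (0 : ℝ), (u : ℂ) ^ (b - 1) * cexp (-(z * u)) - f u)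
      (-∫ u in Ioi (0 : ℝ), (u : ℂ) ^ b * cexp (-(z₀ * u))) z₀ := by
  rw [← integral_neg]
  refine (hasDerivAt_integral_of_dominated_loc_of_deriv_le (s := {z : ℂ | z₀.re / 2 < z.re})
    (F' := fun z u => -((u : ℂ) ^ b * cexp (-(z * u))))
    (bound := fun u => u ^ b.re * Real.exp (-(z₀.re / 2 * u)))
    ((Complex.isOpen_re_gt _).mem_nhds (half_lt_self hz₀))
    (Eventually.of_forall fun z =>
      (aestronglyMeasurable_ofReal_cpow_mul_cexp_neg_mul (b - 1) z).sub hf)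
    hint (aestronglyMeasurable_ofReal_cpow_mul_cexp_neg_mul b z₀).neg ?_
    (integrableOn_rpow_mul_exp_neg_mul hb (half_pos hz₀)) ?_).2
  · filter_upwards [ae_restrict_mem measurableSet_Ioi] with u (hu : 0 < u) z (hz : _ < z.re)
    rw [norm_neg, norm_ofReal_cpow_mul_cexp_neg_mul hu]
    gcongr
  · filter_upwards [ae_restrict_mem measurableSet_Ioi] with u (hu : 0 < u) z _
    exact (hasDerivAt_ofReal_cpow_sub_one_mul_cexp_neg_mul hu b z).sub_const (f u)

lemma frequently_ofReal_pos_nhdsNE_one : ∃ᶠ w : ℂ in 𝓝[≠] 1, ∃ r : ℝ, 0 < r ∧ w = r := by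
  have hmaps : Tendsto ((↑) : ℝ → ℂ) (𝓝[≠] (1 : ℝ)) (𝓝[≠] (1 : ℂ)) :=
    tendsto_nhdsWithin_of_tendsto_nhds_of_eventually_within _
      (Complex.continuous_ofReal.tendsto' 1 1 Complex.ofReal_one |>.mono_left nhdsWithin_le_nhds)
      (eventually_nhdsWithin_of_forall fun r hr => by simpa using hr)
  refine hmaps.frequently (Eventually.frequently ?_)
  filter_upwards [nhdsWithin_le_nhds (lt_mem_nhds one_pos)] with r hr using ⟨r, hr, rfl⟩

lemma integral_ofReal_cpow_mul_cexp_neg_mul {a z : ℂ} (ha : 0 < a.re) (hz : 0 < z.re) :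
    ∫ u in Ioi (0 : ℝ), (u : ℂ) ^ (a - 1) * cexp (-(z * u)) = Complex.Gamma a * z ^ (-a) := by
  have hF : DifferentiableOn ℂ
      (fun z : ℂ => ∫ u in Ioi (0 : ℝ), (u : ℂ) ^ (a - 1) * cexp (-(z * u))) {z | 0 < z.re} := by
    intro w hw
    have hint := integrableOn_ofReal_cpow_mul_cexp_neg_mul (a := a - 1) (by simpa using ha) hw
    have hderiv := hasDerivAt_integral_ofReal_cpow_sub_one_mul_cexp_neg_mul_sub (b := a)
      (by linarith) hw (f := 0) aestronglyMeasurable_const (by simpa using hint)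
    simpa using hderiv.differentiableAt.differentiableWithinAt
  have hG : DifferentiableOn ℂ (fun z : ℂ => Complex.Gamma a * z ^ (-a)) {z | 0 < z.re} :=
    fun w hw => ((differentiableAt_id.cpow_const (Or.inl hw)).const_mul _).differentiableWithinAt
  refine (hF.analyticOnNhd (Complex.isOpen_re_gt 0)).eqOn_of_preconnected_of_frequently_eq
    (hG.analyticOnNhd (Complex.isOpen_re_gt 0)) (convex_halfSpace_re_gt 0).isPreconnected
    (z₀ := 1) (by simp) ?_ hz
  refine frequently_ofReal_pos_nhdsNE_one.mono ?_
  rintro _ ⟨r, hr, rfl⟩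
  rw [Complex.integral_cpow_mul_exp_neg_mul_Ioi ha hr, one_div, Complex.inv_cpow _ _ (by
    simp [Complex.arg_ofReal_of_nonneg hr.le, Real.pi_ne_zero.symm]), Complex.cpow_neg, mul_comm]

lemma integral_ofReal_cpow_mul_cexp_neg_mul_sub_cexp_neg {s z : ℂ} (hs : -1 < s.re) (hs0 : s ≠ 0)
    (hz : 0 < z.re) :
    ∫ u in Ioi (0 : ℝ), (u : ℂ) ^ (s - 1) * (cexp (-(z * u)) - cexp (-u))
      = Complex.Gamma (s + 1) / s * (z ^ (-s) - 1) := by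
  have hG : ∀ w ∈ {w : ℂ | 0 < w.re}, HasDerivAt
      (fun z : ℂ => ∫ u in Ioi (0 : ℝ), (u : ℂ) ^ (s - 1) * (cexp (-(z * u)) - cexp (-u)))
      (-(Complex.Gamma (s + 1) * w ^ (-(s + 1)))) w := by
    intro w hw
    have hs1 : 0 < (s + 1).re := by simp; linarith
    simp_rw [mul_sub]
    convert hasDerivAt_integral_ofReal_cpow_sub_one_mul_cexp_neg_mul_sub hs hw
      (f := fun u : ℝ => (u : ℂ) ^ (s - 1) * cexp (-u))
      (by simpa using aestronglyMeasurable_ofReal_cpow_mul_cexp_neg_mul (s - 1) 1)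
      (by simpa [mul_sub] using integrableOn_ofReal_cpow_mul_cexp_neg_mul_sub_cexp_neg hs hw)
      using 2
    simpa using (integral_ofReal_cpow_mul_cexp_neg_mul hs1 hw).symm
  have hK : ∀ w ∈ {w : ℂ | 0 < w.re}, HasDerivAt
      (fun z : ℂ => Complex.Gamma (s + 1) / s * (z ^ (-s) - 1))
      (-(Complex.Gamma (s + 1) * w ^ (-(s + 1)))) w := by
    intro w hw
    refine (((hasDerivAt_id w).cpow_const (Or.inl hw)).sub_const 1 |>.const_mul _).congr_deriv ?_
    rw [show -s - 1 = -(s + 1) by ring]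
    field_simp
    simp
  refine (Complex.isOpen_re_gt 0).eqOn_of_deriv_eq (convex_halfSpace_re_gt 0).isPreconnected
    (fun w hw => (hG w hw).differentiableAt.differentiableWithinAt)
    (fun w hw => (hK w hw).differentiableAt.differentiableWithinAt)
    (fun w hw => (hG w hw).deriv.trans (hK w hw).deriv.symm) (x := 1) (by simp) (by simp) hz

lemma arg_one_sub_ofReal_mul_I (t : ℝ) : Complex.arg (1 - t * I) = -arctan t := by
  rw [Complex.arg_of_re_nonneg (by simp), Complex.norm_def, Complex.normSq_apply]
  simp [arctan_eq_arcsin, neg_div, ← Real.arcsin_neg, sq]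

lemma re_one_sub_ofReal_mul_I_cpow (t s : ℝ) :
    ((1 - t * I) ^ (s : ℂ)).re = Real.cos (arctan t) ^ (-s) * Real.cos (s * arctan t) := by
  rw [Complex.cpow_ofReal_re, arg_one_sub_ofReal_mul_I, Real.cos_arctan, one_div,
    Real.inv_rpow (Real.sqrt_nonneg _), ← Real.rpow_neg (Real.sqrt_nonneg _), neg_neg,
    Complex.norm_def, Complex.normSq_apply]
  simp [sq, mul_comm s]

lemma integral_cos_mul_sub_one_mul_rpow_mul_exp_neg {s : ℝ} (hs : -1 < s) (hs0 : s ≠ 0) (t : ℝ) :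
    ∫ u in Ioi (0 : ℝ), (Real.cos (t * u) - 1) * u ^ (s - 1) * Real.exp (-u)
      = Real.Gamma (s + 1) / s * (Real.cos (arctan t) ^ s * Real.cos (s * arctan t) - 1) := by
  have hz : 0 < (1 - t * I).re := by simp
  have hpointwise : ∀ u ∈ Ioi (0 : ℝ), (Real.cos (t * u) - 1) * u ^ (s - 1) * Real.exp (-u)
      = ((u : ℂ) ^ ((s : ℂ) - 1) * (cexp (-((1 - t * I) * u)) - cexp (-u))).re := by
    intro u (hu : 0 < u)
    rw [← Complex.ofReal_one, ← Complex.ofReal_sub, ← Complex.ofReal_cpow hu.le,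
      Complex.re_ofReal_mul, Complex.sub_re, Complex.exp_re, Complex.exp_re]
    simp
    ring
  have hre := integral_re
    (integrableOn_ofReal_cpow_mul_cexp_neg_mul_sub_cexp_neg (s := s) (by simpa using hs) hz)
  simp only [RCLike.re_to_complex] at hre
  have hΓ : Complex.Gamma (s + 1) / s = ((Real.Gamma (s + 1) / s : ℝ) : ℂ) := by
    push_cast [← Complex.Gamma_ofReal]
    rfl
  rw [setIntegral_congr_fun measurableSet_Ioi hpointwise, hre,
    integral_ofReal_cpow_mul_cexp_neg_mul_sub_cexp_neg (by simpa using hs) (by exact_mod_cast hs0)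
      hz, ← Complex.ofReal_neg, hΓ, Complex.re_ofReal_mul, Complex.sub_re,
    re_one_sub_ofReal_mul_I_cpow, Complex.one_re, neg_neg, neg_mul, Real.cos_neg]

lemma integral_comp_rpow_mul_rpow_Ioi (g : ℝ → ℝ) {p : ℝ} (hp : 0 < p) (d : ℝ) :
    ∫ r in Ioi (0 : ℝ), g (r ^ p) * r ^ (d - 1)
      = p⁻¹ * ∫ u in Ioi (0 : ℝ), g u * u ^ (d / p - 1) := by
  rw [← integral_comp_rpow_Ioi_of_pos (g := fun u => g u * u ^ (d / p - 1)) hp,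
    ← integral_const_mul]
  refine setIntegral_congr_fun measurableSet_Ioi fun r (hr : 0 < r) => ?_
  rw [smul_eq_mul, ← Real.rpow_mul hr.le, mul_sub, mul_div_cancel₀ _ hp.ne', mul_one]
  have hpow : r ^ (p - 1) * r ^ (d - p) = r ^ (d - 1) := by
    rw [← Real.rpow_add hr]; ring_nf
  rw [← hpow]
  field_simp

theorem stmt_12_general (α β d : ℝ) (hα0 : 0 < α)
    (hd : -α < d) (hd0 : d < 0) :
    ∫ r in Set.Ioi (0:ℝ),
        (Real.cos (β * Real.tan (Real.pi * α / 2) * r ^ α) - 1) * r ^ (d - 1) * Real.exp (-(r ^ α))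
      = ((Real.cos (α * (α⁻¹ * Real.arctan (β * Real.tan (Real.pi * α / 2))))) ^ (d / α)
          * Real.cos (d * (α⁻¹ * Real.arctan (β * Real.tan (Real.pi * α / 2)))) - 1)
          * Real.Gamma (1 + d / α) / d := by
  set t := β * Real.tan (Real.pi * α / 2)
  have hs : -1 < d / α := by rw [lt_div_iff₀ hα0]; linarith
  have hs0 : d / α ≠ 0 := div_ne_zero hd0.ne hα0.ne'
  calc _ = α⁻¹ * ∫ u in Ioi (0 : ℝ),
          (Real.cos (t * u) - 1) * u ^ (d / α - 1) * Real.exp (-u) := by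
        simpa only [mul_right_comm] using
          integral_comp_rpow_mul_rpow_Ioi (fun u => (Real.cos (t * u) - 1) * Real.exp (-u)) hα0 d
    _ = _ := by
        rw [integral_cos_mul_sub_one_mul_rpow_mul_exp_neg hs hs0, mul_inv_cancel_left₀ hα0.ne',
          add_comm 1]
        field_simp

theorem stmt_12 (α β d : ℝ) (hα0 : 0 < α) (hα2 : α < 2) (hα1 : α ≠ 1)
    (hβ : β ∈ Set.Icc (-1 : ℝ) 1) (hd : -α < d) (hd0 : d < 0) :
    ∫ r in Set.Ioi (0:ℝ),
        (Real.cos (β * Real.tan (Real.pi * α / 2) * r ^ α) - 1) * r ^ (d - 1) * Real.exp (-(r ^ α))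
      = ((Real.cos (α * (α⁻¹ * Real.arctan (β * Real.tan (Real.pi * α / 2))))) ^ (d / α)
          * Real.cos (d * (α⁻¹ * Real.arctan (β * Real.tan (Real.pi * α / 2)))) - 1)
          * Real.Gamma (1 + d / α) / d :=
  stmt_12_general α β d hα0 hd hd0
end
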